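/- Let P be a finite 2-group. Then there exists a characteristic subgroup D of P such that every element of D has order dividing 4, [D,P] ≤ Z(D), and every automorphism of P of odd order which fixes D pointwise is the identity. -/

import Mathlib

/-!
Thompson's critical subgroup argument. Take `C` maximal among the characteristic subgroups whose
squares and commutators with `P` lie in `Z(C)`. If `C_P(C) ⊄ C`, the image of `C_P(C)` in the
`2`-group `P ⧸ Z(C)` meets `Ω₁(Z(P ⧸ Z(C)))`, and adjoining to `C` the elements of `C_P(C)` that
map into `Ω₁(Z(P ⧸ Z(C)))` gives a larger such subgroup; hence `C_P(C) ≤ C`. Commutators of `C` are central involutions, so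
`D = {x ∈ C | x ^ 4 = 1}` is a subgroup. An odd-order automorphism `φ` fixing a `2`-element `c`
with `φ x = x * c` fixes `x`. If `φ` fixes `D` and `x ^ 2` for `x ∈ C`, then `c = x⁻¹ * φ x`
satisfies `c ^ 4 = 1`, so descending along `x, x ^ 2, x ^ 4, …` shows that `φ` fixes `C`; and then
`x⁻¹ * φ x` centralises `C` for every `x`, hence lies in `C` and is fixed.
-/

open Subgroup
open scoped commutatorElement

variable {G : Type*} [Group G]

theorem MulAut.apply_eq_self_of_coprime (φ : MulAut G) {x : G}
    (hfix : φ (x⁻¹ * φ x) = x⁻¹ * φ x) (hcop : (orderOf (x⁻¹ * φ x)).Coprime (orderOf φ)) :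
    φ x = x := by
  set c := x⁻¹ * φ x
  have hφx : φ x = x * c := (mul_inv_cancel_left x (φ x)).symm
  have hpow : ∀ n : ℕ, (φ ^ n) x = x * c ^ n := by
    intro n
    induction n with
    | zero => simp
    | succ n ih =>
      rw [pow_succ', MulAut.mul_apply, ih, map_mul, map_pow, hfix, hφx, mul_assoc, ← pow_succ']
  have hc : c ^ orderOf φ = 1 := by
    simpa [pow_orderOf_eq_one] using (hpow (orderOf φ)).symm
  have : c = 1 := orderOf_eq_one_iff.mp (hcop.eq_one_of_dvd (orderOf_dvd_of_pow_eq_one hc))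
  rwa [inv_mul_eq_one, eq_comm] at this

theorem IsPGroup.apply_eq_self_of_odd (hG : IsPGroup 2 G) {φ : MulAut G}
    (hφ : Odd (orderOf φ)) {x : G} (hfix : φ (x⁻¹ * φ x) = x⁻¹ * φ x) : φ x = x :=
  φ.apply_eq_self_of_coprime hfix (hG.orderOf_coprime (Nat.coprime_two_left.mpr hφ) _)

theorem MulAut.inv_mul_apply_mem_centralizer {H : Subgroup G} [H.Normal] {φ : MulAut G}
    (hφ : ∀ h ∈ H, φ h = h) (x : G) : x⁻¹ * φ x ∈ centralizer (H : Set G) := by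
  rw [mem_centralizer_iff]
  intro a ha
  have hconj : φ x * a * (φ x)⁻¹ = x * a * x⁻¹ := by
    simpa [hφ a ha] using hφ _ (Normal.conj_mem ‹_› a ha x)
  calc a * (x⁻¹ * φ x) = x⁻¹ * (x * a * x⁻¹) * φ x := by group
    _ = x⁻¹ * φ x * a := by rw [← hconj]; group

theorem IsPGroup.inf_center_ne_bot {p : ℕ} [Fact p.Prime] [Finite G] (hG : IsPGroup p G)
    {N : Subgroup G} [N.Normal] (hN : N ≠ ⊥) : N ⊓ center G ≠ ⊥ := by
  have : Nontrivial N := (nontrivial_iff_ne_bot N).mpr hN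
  have hdvd : p ∣ Nat.card N :=
    (hG.to_subgroup N).card_eq_or_dvd.resolve_left Finite.one_lt_card.ne'
  obtain ⟨b, hb, hb1⟩ :=
    (hG.of_equiv ConjAct.toConjAct).exists_fixed_point_of_prime_dvd_card_of_fixed_point
      (α := N) hdvd (a := 1) (fun g => smul_one g)
  have hbcen : (b : G) ∈ center G := mem_center_iff.mpr fun g => by
    have h := congrArg Subtype.val (hb (ConjAct.toConjAct g))
    rw [ConjAct.Subgroup.val_conj_smul, ConjAct.toConjAct_smul] at h
    calc g * b = g * b * g⁻¹ * g := by group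
      _ = b * g := by rw [h]
  intro h
  have hb' : (b : G) ∈ N ⊓ center G := ⟨b.2, hbcen⟩
  rw [h, mem_bot] at hb'
  exact hb1 (Subtype.ext hb'.symm)

theorem IsPGroup.exists_mem_inf_center_orderOf_eq {p : ℕ} [Fact p.Prime] [Finite G]
    (hG : IsPGroup p G) {N : Subgroup G} [N.Normal] (hN : N ≠ ⊥) :
    ∃ x ∈ N ⊓ center G, orderOf x = p := by
  have : Nontrivial ↥(N ⊓ center G) := (nontrivial_iff_ne_bot _).mpr (hG.inf_center_ne_bot hN)
  obtain ⟨x, hx⟩ := exists_prime_orderOf_dvd_card' p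
    ((hG.to_subgroup (N ⊓ center G)).card_eq_or_dvd.resolve_left Finite.one_lt_card.ne')
  exact ⟨x, x.2, (orderOf_coe x).trans hx⟩

theorem commutatorElement_sq_eq_one {x y : G} (hx : Commute x ⁅y, x⁆) (hy : Commute y (x ^ 2)) :
    ⁅y, x⁆ ^ 2 = 1 := by
  have h := commutatorElement_mul_right_eq_mul_conj y x x
  rwa [← sq, commutatorElement_eq_one_iff_commute.mpr hy, mul_assoc _ x, hx.eq,
    ← mul_assoc, mul_inv_cancel_right, ← sq, eq_comm] at h

theorem mul_pow_four_eq_one {x y : G} (hx : Commute x ⁅y, x⁆) (hy : Commute y ⁅y, x⁆)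
    (ht : ⁅y, x⁆ ^ 2 = 1) (hxy : Commute (x ^ 2) (y ^ 2)) (hx4 : x ^ 4 = 1) (hy4 : y ^ 4 = 1) :
    (x * y) ^ 4 = 1 := by
  have hsq : (x * y) ^ 2 = ⁅y, x⁆ * (x ^ 2 * y ^ 2) := by
    calc (x * y) ^ 2 = x * ⁅y, x⁆ * x * y * y := by rw [sq, commutatorElement_def]; group
      _ = ⁅y, x⁆ * (x ^ 2 * y ^ 2) := by rw [hx.eq]; simp only [sq, mul_assoc]
  have hcomm : Commute ⁅y, x⁆ (x ^ 2 * y ^ 2) :=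
    (hx.symm.pow_right 2).mul_right (hy.symm.pow_right 2)
  calc (x * y) ^ 4 = ((x * y) ^ 2) ^ 2 := by rw [← pow_mul]
    _ = (x ^ 2) ^ 2 * (y ^ 2) ^ 2 := by rw [hsq, hcomm.mul_pow, ht, one_mul, hxy.mul_pow]
    _ = 1 := by rw [← pow_mul, ← pow_mul, hx4, hy4, one_mul]

theorem pow_four_eq_one_of_mul_sq_eq {x c : G} (h : (x * c) ^ 2 = x ^ 2) (ht : ⁅x, c⁆ ^ 2 = 1) :
    c ^ 4 = 1 := by
  have hcxc : c * x * c = x := mul_left_cancel (a := x) <| by rw [← sq x, ← h, sq]; group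
  have hcomm : ⁅x, c⁆ = c⁻¹ ^ 2 := by
    calc ⁅x, c⁆ = c⁻¹ * (c * x * c) * x⁻¹ * c⁻¹ := by rw [commutatorElement_def]; group
      _ = c⁻¹ ^ 2 := by rw [hcxc]; group
  rw [hcomm, ← pow_mul, inv_pow] at ht
  exact inv_eq_one.mp ht

namespace Subgroup

theorem Characteristic.apply_mem {H : Subgroup G} [hH : H.Characteristic] (φ : MulAut G) {x : G}
    (hx : x ∈ H) : φ x ∈ H := by
  rw [← hH.fixed φ] at hx
  exact hx

/-- The preimage of `Ω₁(Z(G ⧸ N))` when `G ⧸ N` is a `2`-group. -/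
def sqCentralMod (N : Subgroup G) [N.Normal] : Subgroup G where
  carrier := {x | x ^ 2 ∈ N ∧ ∀ g, ⁅x, g⁆ ∈ N}
  one_mem' := ⟨by simp [N.one_mem], fun g => by simp [commutatorElement_one_left, N.one_mem]⟩
  mul_mem' := by
    rintro x y ⟨hx2, hx⟩ ⟨hy2, hy⟩
    refine ⟨?_, fun g => ?_⟩
    · have h : (x * y) ^ 2 = x ^ 2 * (x⁻¹ * ⁅x, y⁆⁻¹ * x⁻¹⁻¹) * y ^ 2 := by
        rw [sq, sq, sq, commutatorElement_def]; group
      rw [h]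
      exact N.mul_mem (N.mul_mem hx2 (Normal.conj_mem ‹_› _ (N.inv_mem (hx y)) _)) hy2
    · rw [commutatorElement_mul_left_eq_conj_mul]
      exact N.mul_mem (Normal.conj_mem ‹_› _ (hy g) x) (hx g)
  inv_mem' := by
    rintro x ⟨hx2, hx⟩
    refine ⟨by rw [inv_pow]; exact N.inv_mem hx2, fun g => ?_⟩
    rw [commutatorElement_inv_left, ← commutatorElement_inv]
    simpa using Normal.conj_mem ‹_› _ (N.inv_mem (hx g)) x⁻¹

instance characteristic_sqCentralMod (N : Subgroup G) [N.Characteristic] :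
    (sqCentralMod N).Characteristic := by
  refine characteristic_iff_le_comap.mpr fun φ x ⟨hx2, hx⟩ => ⟨?_, fun g => ?_⟩
  · simpa [map_pow] using Characteristic.apply_mem φ hx2
  · simpa [map_commutatorElement] using Characteristic.apply_mem φ (hx (φ.symm g))

theorem mem_sqCentralMod_of_mk_mem_center {N : Subgroup G} [N.Normal] {x : G}
    (hcen : (x : G ⧸ N) ∈ center (G ⧸ N)) (hsq : (x : G ⧸ N) ^ 2 = 1) : x ∈ sqCentralMod N := by
  refine ⟨(QuotientGroup.eq_one_iff _).mp (by rw [QuotientGroup.mk_pow, hsq]), fun g => ?_⟩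
  refine (QuotientGroup.eq_one_iff _).mp ?_
  have := map_commutatorElement (QuotientGroup.mk' N) x g
  rw [QuotientGroup.mk'_apply, QuotientGroup.mk'_apply, QuotientGroup.mk'_apply] at this
  rw [this, commutatorElement_eq_one_iff_commute]
  exact (mem_center_iff.mp hcen g).symm

theorem centralizer_le_of_inf_sqCentralMod_le [Finite G] (hG : IsPGroup 2 G) {C : Subgroup G}
    [C.Normal] (h : centralizer C ⊓ sqCentralMod (C ⊓ centralizer C) ≤ C) :
    centralizer C ≤ C := by
  by_contra hle
  obtain ⟨y, hyH, hyC⟩ := SetLike.not_le_iff_exists.mp hle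
  set Z := C ⊓ centralizer C
  set N := (centralizer C).map (QuotientGroup.mk' Z)
  have : N.Normal := Normal.map inferInstance _ (QuotientGroup.mk'_surjective Z)
  have hN : N ≠ ⊥ := by
    refine (ne_bot_iff_exists_ne_one (H := N)).mpr ⟨⟨_, mem_map_of_mem _ hyH⟩, fun h1 => hyC ?_⟩
    exact ((QuotientGroup.eq_one_iff y).mp (congrArg Subtype.val h1)).1
  obtain ⟨e, ⟨heN, hecen⟩, he2⟩ := (hG.to_quotient Z).exists_mem_inf_center_orderOf_eq hN
  obtain ⟨x, hxH, rfl⟩ := mem_map.mp heN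
  have hxC : x ∈ C := h ⟨hxH, mem_sqCentralMod_of_mk_mem_center hecen (he2 ▸ pow_orderOf_eq_one _)⟩
  have : QuotientGroup.mk' Z x = 1 := (QuotientGroup.eq_one_iff x).mpr ⟨hxC, hxH⟩
  simp [this] at he2

/-- Thompson's critical subgroups for `p = 2`, minus `C_G(C) ≤ C`, which maximality supplies. -/
structure IsPrecritical (C : Subgroup G) : Prop where
  sq_mem : ∀ x ∈ C, x ^ 2 ∈ C ⊓ centralizer C
  commutatorElement_mem : ∀ x ∈ C, ∀ g, ⁅x, g⁆ ∈ C ⊓ centralizer C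

theorem isPrecritical_bot : (⊥ : Subgroup G).IsPrecritical :=
  ⟨fun x hx => by simp [mem_bot.mp hx, one_mem], fun x hx g => by
    simp [mem_bot.mp hx, commutatorElement_one_left, one_mem]⟩

namespace IsPrecritical

variable {C : Subgroup G}

theorem le_sqCentralMod [C.Normal] (hC : C.IsPrecritical) : C ≤ sqCentralMod (C ⊓ centralizer C) :=
  fun x hx => ⟨hC.sq_mem x hx, hC.commutatorElement_mem x hx⟩

theorem sup [C.Normal] (hC : C.IsPrecritical) {K : Subgroup G} (hKC : K ≤ centralizer C)
    (hK : K ≤ sqCentralMod (C ⊓ centralizer C)) : (C ⊔ K).IsPrecritical := by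
  have hZ : C ⊓ centralizer C ≤ (C ⊔ K) ⊓ centralizer (C ⊔ K : Subgroup G) := by
    refine le_inf (inf_le_left.trans le_sup_left) (le_centralizer_iff.mp (sup_le ?_ ?_))
    · exact le_centralizer_iff.mp inf_le_right
    · exact hKC.trans (centralizer_le inf_le_left)
  have hle : C ⊔ K ≤ sqCentralMod (C ⊓ centralizer C) := sup_le hC.le_sqCentralMod hK
  exact ⟨fun x hx => hZ (hle hx).1, fun x hx g => hZ ((hle hx).2 g)⟩

theorem commutatorElement_sq_eq_one (hC : C.IsPrecritical) {x y : G} (hx : x ∈ C) (hy : y ∈ C) :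
    ⁅x, y⁆ ^ 2 = 1 :=
  _root_.commutatorElement_sq_eq_one
    (mem_centralizer_iff.mp (hC.commutatorElement_mem x hx y).2 y hy)
    (mem_centralizer_iff.mp (hC.sq_mem y hy).2 x hx)

/-- `Ω₂(C)`: the elements of `C` of order dividing `4` already form a subgroup. -/
def omegaTwo (hC : C.IsPrecritical) : Subgroup G where
  carrier := {x | x ∈ C ∧ x ^ 4 = 1}
  one_mem' := ⟨C.one_mem, one_pow 4⟩
  mul_mem' := by
    rintro x y ⟨hx, hx4⟩ ⟨hy, hy4⟩
    have hcomm := (hC.commutatorElement_mem y hy x).2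
    exact ⟨C.mul_mem hx hy, mul_pow_four_eq_one (mem_centralizer_iff.mp hcomm x hx)
      (mem_centralizer_iff.mp hcomm y hy) (hC.commutatorElement_sq_eq_one hy hx)
      (mem_centralizer_iff.mp (hC.sq_mem y hy).2 _ (C.pow_mem hx 2)) hx4 hy4⟩
  inv_mem' := by
    rintro x ⟨hx, hx4⟩
    exact ⟨C.inv_mem hx, by rw [inv_pow, hx4, inv_one]⟩

theorem omegaTwo_le (hC : C.IsPrecritical) : hC.omegaTwo ≤ C := fun _ hx => hx.1

instance characteristic_omegaTwo [C.Characteristic] (hC : C.IsPrecritical) :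
    hC.omegaTwo.Characteristic :=
  characteristic_iff_le_comap.mpr fun φ x ⟨hx, hx4⟩ =>
    ⟨Characteristic.apply_mem φ hx, by simp [← map_pow, hx4]⟩

theorem commutator_omegaTwo_le [C.Characteristic] (hC : C.IsPrecritical) :
    ⁅hC.omegaTwo, ⊤⁆ ≤ hC.omegaTwo ⊓ centralizer (hC.omegaTwo : Set G) :=
  le_inf (commutator_le_left _ _) <| commutator_le.mpr fun x hx g _ =>
    centralizer_le hC.omegaTwo_le (hC.commutatorElement_mem x hx.1 g).2

section OddAutomorphism

variable [C.Characteristic] {φ : MulAut G}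

theorem apply_eq_self_of_apply_sq (hG : IsPGroup 2 G) (hC : C.IsPrecritical)
    (hφ : Odd (orderOf φ)) (hfix : ∀ x ∈ hC.omegaTwo, φ x = x) {x : G} (hx : x ∈ C)
    (hx2 : φ (x ^ 2) = x ^ 2) : φ x = x := by
  set c := x⁻¹ * φ x
  have hc : c ∈ C := C.mul_mem (C.inv_mem hx) (Characteristic.apply_mem φ hx)
  have hsq : (x * c) ^ 2 = x ^ 2 := by rw [mul_inv_cancel_left, ← map_pow, hx2]
  have hc4 : c ^ 4 = 1 :=
    pow_four_eq_one_of_mul_sq_eq hsq (hC.commutatorElement_sq_eq_one hx hc)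
  exact hG.apply_eq_self_of_odd hφ (hfix c ⟨hc, hc4⟩)

theorem apply_eq_self_of_mem (hG : IsPGroup 2 G) (hC : C.IsPrecritical)
    (hφ : Odd (orderOf φ)) (hfix : ∀ x ∈ hC.omegaTwo, φ x = x) {x : G} (hx : x ∈ C) :
    φ x = x := by
  obtain ⟨n, hn⟩ := hG x
  induction n generalizing x with
  | zero => rw [pow_zero, pow_one] at hn; rw [hn, map_one]
  | succ n ih =>
    refine hC.apply_eq_self_of_apply_sq hG hφ hfix hx (ih (C.pow_mem hx 2) ?_)
    rwa [← pow_mul, ← pow_succ']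

theorem eq_one_of_forall_mem_omegaTwo (hG : IsPGroup 2 G) (hC : C.IsPrecritical)
    (hcent : centralizer C ≤ C) (hφ : Odd (orderOf φ))
    (hfix : ∀ x ∈ hC.omegaTwo, φ x = x) : φ = 1 :=
  have hfixC : ∀ x ∈ C, φ x = x := fun _ => hC.apply_eq_self_of_mem hG hφ hfix
  MulEquiv.ext fun x =>
    hG.apply_eq_self_of_odd hφ (hfixC _ (hcent (MulAut.inv_mul_apply_mem_centralizer hfixC x)))

end OddAutomorphism

end IsPrecritical

theorem _root_.IsPGroup.exists_isPrecritical_centralizer_le [Finite G] (hG : IsPGroup 2 G) :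
    ∃ C : Subgroup G, C.Characteristic ∧ C.IsPrecritical ∧ centralizer C ≤ C := by
  obtain ⟨C, ⟨hCchar, hC⟩, hmax⟩ :=
    Set.Finite.exists_maximal (s := {C : Subgroup G | C.Characteristic ∧ C.IsPrecritical})
      (Set.toFinite _) ⟨⊥, inferInstance, isPrecritical_bot⟩
  refine ⟨C, hCchar, hC, centralizer_le_of_inf_sqCentralMod_le hG ?_⟩
  have hsup := hC.sup (K := centralizer C ⊓ sqCentralMod (C ⊓ centralizer C))
    inf_le_left inf_le_right
  exact le_sup_right.trans (hmax ⟨inferInstance, hsup⟩ le_sup_left)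

end Subgroup

/-- **Thompson-type subgroup for `p = 2`.** Every finite `2`-group `P` has a
characteristic subgroup `D` of exponent dividing `4` with `[D,P] ≤ Z(D)` such that every
automorphism of `P` of odd order fixing `D` pointwise is the identity. -/
theorem exists_characteristic_detecting_subgroup_two
    (P : Type) [Group P] [Finite P] (hP : IsPGroup 2 P) :
    ∃ D : Subgroup P, D.Characteristic ∧ (∀ x ∈ D, x ^ 4 = 1) ∧
      ⁅D, (⊤ : Subgroup P)⁆ ≤ D ⊓ Subgroup.centralizer (D : Set P) ∧
      ∀ φ : MulAut P, Odd (orderOf φ) → (∀ x ∈ D, φ x = x) → φ = 1 := by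
  obtain ⟨C, hCchar, hC, hcent⟩ := hP.exists_isPrecritical_centralizer_le
  exact ⟨hC.omegaTwo, inferInstance, fun x hx => hx.2, hC.commutator_omegaTwo_le,
    fun φ hφ hfix => hC.eq_one_of_forall_mem_omegaTwo hP hcent hφ hfix⟩
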